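/- Let ψ_NXOR be the 3-qubit state defined by ψ_NXOR s = 1/2 if s 2 = s 0 + s 1 + 1 (identifying Fin 2 with ZMod 2) and ψ_NXOR s = 0 otherwise. In the measurement scenario in which each of the three parties may choose between the Pauli observables Y and Z, the empirical model of ψ_NXOR is strongly contextual: no global assignment g : (i : Fin 3) → {Y, Z} → Bool is consistent. -/
import Mathlib


open Complex Finset

/-- A local observable: a pair of vectors forming an orthonormal basis of ℂ². -/
structure Obs where
  eplus : Fin 2 → ℂ
  eminus : Fin 2 → ℂ
  norm_plus : ∑ a : Fin 2, ‖eplus a‖ ^ 2 = 1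
  norm_minus : ∑ a : Fin 2, ‖eminus a‖ ^ 2 = 1
  orth : ∑ a : Fin 2, (starRingEnd ℂ) (eplus a) * eminus a = 0

/-- Probability that context `c` yields joint outcome `o` on state `ψ`. -/
noncomputable def jointProb {n : ℕ} (ψ : (Fin n → Fin 2) → ℂ) (c : Fin n → Obs)
    (o : Fin n → Bool) : ℝ :=
  ‖∑ s : Fin n → Fin 2,
      (∏ i : Fin n,
        (starRingEnd ℂ) ((if o i then (c i).eplus else (c i).eminus) (s i))) * ψ s‖ ^ 2

/-- A global assignment `g` is consistent if in every context of the scenario `M`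
the induced joint outcome is possible. -/
def Consistent {n : ℕ} (ψ : (Fin n → Fin 2) → ℂ) (M : Fin n → Set Obs)
    (g : Fin n → Obs → Bool) : Prop :=
  ∀ c : Fin n → Obs, (∀ i, c i ∈ M i) → jointProb ψ c (fun i => g i (c i)) ≠ 0

def StronglyContextual {n : ℕ} (ψ : (Fin n → Fin 2) → ℂ) (M : Fin n → Set Obs) : Prop :=
  ¬ ∃ g : Fin n → Obs → Bool, Consistent ψ M g

def LogicallyContextual {n : ℕ} (ψ : (Fin n → Fin 2) → ℂ) (M : Fin n → Set Obs) : Prop :=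
  ∃ c : Fin n → Obs, (∀ i, c i ∈ M i) ∧ ∃ o : Fin n → Bool,
    jointProb ψ c o ≠ 0 ∧
    ¬ ∃ g : Fin n → Obs → Bool, Consistent ψ M g ∧ ∀ i, g i (c i) = o i

/-- The Pauli Z observable. -/
noncomputable def pauliZ : Obs where
  eplus := ![1, 0]
  eminus := ![0, 1]
  norm_plus := by simp [Fin.sum_univ_two]
  norm_minus := by simp [Fin.sum_univ_two]
  orth := by simp [Fin.sum_univ_two]

/-- The Pauli Y observable. -/
noncomputable def pauliY : Obs where
  eplus := ![((Real.sqrt 2)⁻¹ : ℝ), ((Real.sqrt 2)⁻¹ : ℝ) * Complex.I]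
  eminus := ![((Real.sqrt 2)⁻¹ : ℝ), -(((Real.sqrt 2)⁻¹ : ℝ) * Complex.I)]
  norm_plus := by
    have h : ‖(((Real.sqrt 2)⁻¹ : ℝ) : ℂ)‖ ^ 2 = 1 / 2 := by
      rw [Complex.norm_real, Real.norm_eq_abs, _root_.sq_abs, inv_pow,
        Real.sq_sqrt (by norm_num : (0:ℝ) ≤ 2)]
      norm_num
    simp [Fin.sum_univ_two, norm_mul, h]
    norm_num [h]
  norm_minus := by
    have h : ‖(((Real.sqrt 2)⁻¹ : ℝ) : ℂ)‖ ^ 2 = 1 / 2 := by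
      rw [Complex.norm_real, Real.norm_eq_abs, _root_.sq_abs, inv_pow,
        Real.sq_sqrt (by norm_num : (0:ℝ) ≤ 2)]
      norm_num
    simp [Fin.sum_univ_two, norm_mul, h]
    norm_num [h]
  orth := by
    have h : ((starRingEnd ℂ) (((Real.sqrt 2)⁻¹ : ℝ) : ℂ)) = (((Real.sqrt 2)⁻¹ : ℝ) : ℂ) :=
      Complex.conj_ofReal _
    simp [Fin.sum_univ_two, map_mul, Complex.conj_I, h]
    linear_combination (((Real.sqrt 2 : ℝ) : ℂ))⁻¹ * (((Real.sqrt 2 : ℝ) : ℂ))⁻¹ * Complex.I_mul_I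

/-- The Pauli X observable. -/
noncomputable def pauliX : Obs where
  eplus := ![((Real.sqrt 2)⁻¹ : ℝ), ((Real.sqrt 2)⁻¹ : ℝ)]
  eminus := ![((Real.sqrt 2)⁻¹ : ℝ), -(((Real.sqrt 2)⁻¹ : ℝ) : ℂ)]
  norm_plus := by
    have h : ‖(((Real.sqrt 2)⁻¹ : ℝ) : ℂ)‖ ^ 2 = 1 / 2 := by
      rw [Complex.norm_real, Real.norm_eq_abs, _root_.sq_abs, inv_pow,
        Real.sq_sqrt (by norm_num : (0:ℝ) ≤ 2)]
      norm_num
    simp [Fin.sum_univ_two, h]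
    norm_num [h]
  norm_minus := by
    have h : ‖(((Real.sqrt 2)⁻¹ : ℝ) : ℂ)‖ ^ 2 = 1 / 2 := by
      rw [Complex.norm_real, Real.norm_eq_abs, _root_.sq_abs, inv_pow,
        Real.sq_sqrt (by norm_num : (0:ℝ) ≤ 2)]
      norm_num
    simp [Fin.sum_univ_two, h]
    norm_num [h]
  orth := by
    have h : ((starRingEnd ℂ) (((Real.sqrt 2)⁻¹ : ℝ) : ℂ)) = (((Real.sqrt 2)⁻¹ : ℝ) : ℂ) :=
      Complex.conj_ofReal _
    simp [Fin.sum_univ_two, h]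

/-- The NXOR state: `ψ s = 1/2` when `s 2 = s 0 + s 1 + 1` in `ZMod 2`, else `0`. -/
noncomputable def psiNXOR : (Fin 3 → Fin 2) → ℂ := fun s =>
  if ((s 2 : ℕ) : ZMod 2) = ((s 0 : ℕ) : ZMod 2) + ((s 1 : ℕ) : ZMod 2) + 1
  then (1 / 2 : ℂ) else 0


lemma sum3 (f : (Fin 3 → Fin 2) → ℂ) :
    ∑ s : Fin 3 → Fin 2, f s = ∑ a : Fin 2, ∑ b : Fin 2, ∑ c : Fin 2, f ![a,b,c] := by
  have : ∑ s : Fin 3 → Fin 2, f s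
      = ∑ p : Fin 2 × Fin 2 × Fin 2, f ![p.1, p.2.1, p.2.2] :=
    Fintype.sum_equiv
      ⟨fun s => (s 0, s 1, s 2), fun p => ![p.1, p.2.1, p.2.2],
        fun s => by funext i; fin_cases i <;> rfl, fun p => rfl⟩
      f (fun p => f ![p.1, p.2.1, p.2.2])
      (fun s => by congr 1; funext i; fin_cases i <;> rfl)
  rw [this, Fintype.sum_prod_type]
  refine Finset.sum_congr rfl fun a _ => ?_
  rw [Fintype.sum_prod_type]

lemma conYYZ (o : Fin 3 → Bool) (h : jointProb psiNXOR ![pauliY, pauliY, pauliZ] o ≠ 0) :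
    (o 0 ^^ (o 1 ^^ o 2)) = true := by
  by_contra hpar
  rw [Bool.not_eq_true] at hpar
  refine h ?_
  rw [jointProb, sum3]
  cases h1 : o 0 <;> cases h2 : o 1 <;> cases h3 : o 2 <;>
    first
    | (rw [h1, h2, h3] at hpar; exact absurd hpar (by decide))
    | (simp only [Fin.sum_univ_two, Fin.prod_univ_three, Matrix.cons_val_zero, Matrix.cons_val_one,
        Matrix.head_cons, Matrix.cons_val_two, Matrix.tail_cons, h1, h2, h3, pauliY, pauliZ, psiNXOR,
        if_true, Bool.false_eq_true, if_false] <;>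
      norm_num [Complex.ext_iff, map_mul, Complex.conj_ofReal, Complex.conj_I,
        show ((0:ZMod 2) = 1) = False from by decide, show ((1:ZMod 2) = 1) = True from by decide,
        show ((0:ZMod 2) = 2) = True from by decide, show ((1:ZMod 2) = 2) = False from by decide,
        show ((0:ZMod 2) = 3) = False from by decide, show ((1:ZMod 2) = 3) = True from by decide])

lemma conYZY (o : Fin 3 → Bool) (h : jointProb psiNXOR ![pauliY, pauliZ, pauliY] o ≠ 0) :
    (o 0 ^^ (o 1 ^^ o 2)) = true := by
  by_contra hpar
  rw [Bool.not_eq_true] at hpar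
  refine h ?_
  rw [jointProb, sum3]
  cases h1 : o 0 <;> cases h2 : o 1 <;> cases h3 : o 2 <;>
    first
    | (rw [h1, h2, h3] at hpar; exact absurd hpar (by decide))
    | (simp only [Fin.sum_univ_two, Fin.prod_univ_three, Matrix.cons_val_zero, Matrix.cons_val_one,
        Matrix.head_cons, Matrix.cons_val_two, Matrix.tail_cons, h1, h2, h3, pauliY, pauliZ, psiNXOR,
        if_true, Bool.false_eq_true, if_false] <;>
      norm_num [Complex.ext_iff, map_mul, Complex.conj_ofReal, Complex.conj_I,
        show ((0:ZMod 2) = 1) = False from by decide, show ((1:ZMod 2) = 1) = True from by decide,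
        show ((0:ZMod 2) = 2) = True from by decide, show ((1:ZMod 2) = 2) = False from by decide,
        show ((0:ZMod 2) = 3) = False from by decide, show ((1:ZMod 2) = 3) = True from by decide])

lemma conZYY (o : Fin 3 → Bool) (h : jointProb psiNXOR ![pauliZ, pauliY, pauliY] o ≠ 0) :
    (o 0 ^^ (o 1 ^^ o 2)) = true := by
  by_contra hpar
  rw [Bool.not_eq_true] at hpar
  refine h ?_
  rw [jointProb, sum3]
  cases h1 : o 0 <;> cases h2 : o 1 <;> cases h3 : o 2 <;>
    first
    | (rw [h1, h2, h3] at hpar; exact absurd hpar (by decide))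
    | (simp only [Fin.sum_univ_two, Fin.prod_univ_three, Matrix.cons_val_zero, Matrix.cons_val_one,
        Matrix.head_cons, Matrix.cons_val_two, Matrix.tail_cons, h1, h2, h3, pauliY, pauliZ, psiNXOR,
        if_true, Bool.false_eq_true, if_false] <;>
      norm_num [Complex.ext_iff, map_mul, Complex.conj_ofReal, Complex.conj_I,
        show ((0:ZMod 2) = 1) = False from by decide, show ((1:ZMod 2) = 1) = True from by decide,
        show ((0:ZMod 2) = 2) = True from by decide, show ((1:ZMod 2) = 2) = False from by decide,
        show ((0:ZMod 2) = 3) = False from by decide, show ((1:ZMod 2) = 3) = True from by decide])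

lemma conZZZ (o : Fin 3 → Bool) (h : jointProb psiNXOR ![pauliZ, pauliZ, pauliZ] o ≠ 0) :
    (o 0 ^^ (o 1 ^^ o 2)) = false := by
  by_contra hpar
  rw [Bool.not_eq_false] at hpar
  refine h ?_
  rw [jointProb, sum3]
  cases h1 : o 0 <;> cases h2 : o 1 <;> cases h3 : o 2 <;>
    first
    | (rw [h1, h2, h3] at hpar; exact absurd hpar (by decide))
    | (simp only [Fin.sum_univ_two, Fin.prod_univ_three, Matrix.cons_val_zero, Matrix.cons_val_one,
        Matrix.head_cons, Matrix.cons_val_two, Matrix.tail_cons, h1, h2, h3, pauliY, pauliZ, psiNXOR,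
        if_true, Bool.false_eq_true, if_false] <;>
      norm_num [Complex.ext_iff, map_mul, Complex.conj_ofReal, Complex.conj_I,
        show ((0:ZMod 2) = 1) = False from by decide, show ((1:ZMod 2) = 1) = True from by decide,
        show ((0:ZMod 2) = 2) = True from by decide, show ((1:ZMod 2) = 2) = False from by decide,
        show ((0:ZMod 2) = 3) = False from by decide, show ((1:ZMod 2) = 3) = True from by decide])

/-- The NXOR state is strongly contextual for the scenario where each of the three
parties chooses between the Pauli observables Y and Z. -/
theorem psiNXOR_stronglyContextual :
    StronglyContextual psiNXOR (fun _ : Fin 3 => ({pauliY, pauliZ} : Set Obs)) := by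
  rintro ⟨g, hg⟩
  have mem : ∀ c : Fin 3 → Obs, (∀ i, c i = pauliY ∨ c i = pauliZ) →
      (∀ i, c i ∈ (fun _ : Fin 3 => ({pauliY, pauliZ} : Set Obs)) i) := by
    intro c hc i; rcases hc i with h | h <;> simp [h]
  have h1 := conYYZ _ (hg ![pauliY, pauliY, pauliZ]
    (mem _ (by intro i; fin_cases i <;> simp)))
  have h2 := conYZY _ (hg ![pauliY, pauliZ, pauliY]
    (mem _ (by intro i; fin_cases i <;> simp)))
  have h3 := conZYY _ (hg ![pauliZ, pauliY, pauliY]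
    (mem _ (by intro i; fin_cases i <;> simp)))
  have h4 := conZZZ _ (hg ![pauliZ, pauliZ, pauliZ]
    (mem _ (by intro i; fin_cases i <;> simp)))
  simp only [Matrix.cons_val_zero, Matrix.cons_val_one, Matrix.head_cons,
    Matrix.cons_val_two, Matrix.tail_cons] at h1 h2 h3 h4
  revert h1 h2 h3 h4
  cases g 0 pauliY <;> cases g 1 pauliY <;> cases g 2 pauliY <;>
    cases g 0 pauliZ <;> cases g 1 pauliZ <;> cases g 2 pauliZ <;> decide
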